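/- Every symmetry of the 24-cell permutes the three colour classes of its facets: if φ is a linear isometry equivalence of EuclideanSpace ℝ (Fin 4) with φ '' V = V, then each of the image sets φ '' G, φ '' R, φ '' B equals one of the sets G, R, B (and the three images are pairwise distinct, so φ induces a permutation of {G, R, B}). -/

import Mathlib

open scoped RealInnerProductSpace Pointwise

/-- The `i`-th standard basis vector of `EuclideanSpace ℝ (Fin 4)`. -/
noncomputable def stdV (i : Fin 4) : EuclideanSpace ℝ (Fin 4) :=
  EuclideanSpace.single i (1 : ℝ)

/-- The 24 vertices of the 24-cell: all permutations of the coordinates of `(±1, ±1, 0, 0)`. -/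
def cellV : Set (EuclideanSpace ℝ (Fin 4)) :=
  {x | ∃ i j : Fin 4, i ≠ j ∧ ∃ ε δ : ℝ, (ε = 1 ∨ ε = -1) ∧ (δ = 1 ∨ δ = -1) ∧
    x = ε • stdV i + δ • stdV j}

/-- The 8 green vectors `±eᵢ`. -/
def colG : Set (EuclideanSpace ℝ (Fin 4)) :=
  {x | ∃ i : Fin 4, x = stdV i ∨ x = -stdV i}

/-- The 8 red vectors `(±1/2, ±1/2, ±1/2, ±1/2)` with an even number of minus signs. -/
def colR : Set (EuclideanSpace ℝ (Fin 4)) :=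
  {x | ∃ ε : Fin 4 → ℝ, (∀ i, ε i = 1 ∨ ε i = -1) ∧ (∏ i, ε i) = 1 ∧ ∀ i, x i = ε i / 2}

/-- The 8 blue vectors `(±1/2, ±1/2, ±1/2, ±1/2)` with an odd number of minus signs. -/
def colB : Set (EuclideanSpace ℝ (Fin 4)) :=
  {x | ∃ ε : Fin 4 → ℝ, (∀ i, ε i = 1 ∨ ε i = -1) ∧ (∏ i, ε i) = -1 ∧ ∀ i, x i = ε i / 2}

/-- The polar of a subset of `EuclideanSpace ℝ (Fin 4)`. -/
def polarSet (S : Set (EuclideanSpace ℝ (Fin 4))) : Set (EuclideanSpace ℝ (Fin 4)) :=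
  {y | ∀ x ∈ S, ⟪x, y⟫ ≤ 1}

/-! The facet centres `colG ∪ colR ∪ colB` are exactly the midpoints of orthogonal pairs of
vertices: for such a pair `u + v` lies in `ℤ⁴` and has squared norm `4`, so it is `±2eᵢ` or
`(±1, ±1, ±1, ±1)`. Hence every symmetry of the 24-cell preserves the set of facet centres.
On that set, two centres have the same colour iff their inner product is not `±1/2`; an
isometry preserves this relation, so it maps the colour class of `c` onto that of `φ c`. -/

section InnerProductSpace

variable {E F : Type*} [NormedAddCommGroup E] [InnerProductSpace ℝ E]
  [NormedAddCommGroup F] [InnerProductSpace ℝ F]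

def orthoMidpoints (S : Set E) : Set E :=
  {x | ∃ u ∈ S, ∃ v ∈ S, ⟪u, v⟫ = 0 ∧ x = (2⁻¹ : ℝ) • (u + v)}

def colourClass (U : Set E) (c : E) : Set E :=
  {w ∈ U | |⟪c, w⟫| ≠ 2⁻¹}

theorem LinearIsometry.image_orthoMidpoints (φ : E →ₗᵢ[ℝ] F) (S : Set E) :
    φ '' orthoMidpoints S = orthoMidpoints (φ '' S) := by
  ext x
  constructor
  · rintro ⟨_, ⟨u, hu, v, hv, huv, rfl⟩, rfl⟩
    exact ⟨φ u, ⟨u, hu, rfl⟩, φ v, ⟨v, hv, rfl⟩, by rwa [φ.inner_map_map], by simp⟩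
  · rintro ⟨_, ⟨u, hu, rfl⟩, _, ⟨v, hv, rfl⟩, huv, rfl⟩
    rw [φ.inner_map_map] at huv
    exact ⟨(2⁻¹ : ℝ) • (u + v), ⟨u, hu, v, hv, huv, rfl⟩, by simp⟩

theorem LinearIsometry.image_colourClass (φ : E →ₗᵢ[ℝ] F) (U : Set E) (c : E) :
    φ '' colourClass U c = colourClass (φ '' U) (φ c) := by
  ext x
  constructor
  · rintro ⟨w, ⟨hw, hcw⟩, rfl⟩
    exact ⟨⟨w, hw, rfl⟩, by rwa [φ.inner_map_map]⟩
  · rintro ⟨⟨w, hw, rfl⟩, hcw⟩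
    rw [φ.inner_map_map] at hcw
    exact ⟨w, ⟨hw, hcw⟩, rfl⟩

theorem colourClass_union_eq_left {A B : Set E} {c : E} (hA : ∀ w ∈ A, |⟪c, w⟫| ≠ 2⁻¹)
    (hB : ∀ w ∈ B, |⟪c, w⟫| = 2⁻¹) : colourClass (A ∪ B) c = A := by
  ext w
  constructor
  · rintro ⟨hw | hw, hcw⟩
    exacts [hw, absurd (hB w hw) hcw]
  · exact fun hw => ⟨Or.inl hw, hA w hw⟩

end InnerProductSpace

theorem Int.sum_sq_eq_four_cases {ι : Type*} [Fintype ι] [DecidableEq ι]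
    (hι : Fintype.card ι ≤ 4) (z : ι → ℤ) (h : ∑ m, z m ^ 2 = 4) :
    (∃ m, z m ^ 2 = 4 ∧ ∀ n ≠ m, z n = 0) ∨ ∀ m, z m ^ 2 = 1 := by
  by_cases h4 : ∃ m, z m ^ 2 = 4
  · obtain ⟨m, hm⟩ := h4
    refine Or.inl ⟨m, hm, fun n hn => ?_⟩
    have hrest : ∑ n ∈ Finset.univ.erase m, z n ^ 2 = 0 := by
      rw [← Finset.add_sum_erase _ _ (Finset.mem_univ m)] at h
      linarith
    have := (Finset.sum_eq_zero_iff_of_nonneg (fun n _ => sq_nonneg (z n))).1 hrest n (by simp [hn])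
    exact pow_eq_zero_iff two_ne_zero |>.1 this
  · push Not at h4
    have hle : ∀ m, z m ^ 2 ≤ 1 := fun m => by
      have hm : z m ^ 2 ≤ 4 :=
        h ▸ Finset.single_le_sum (fun n _ => sq_nonneg (z n)) (Finset.mem_univ m)
      rcases eq_or_ne (z m) 0 with h0 | h0
      · simp [h0]
      · exact (Int.sq_eq_one_of_sq_lt_four (hm.lt_of_ne (h4 m)) h0).le
    have hsum : ∑ m, z m ^ 2 = ∑ _m : ι, (1 : ℤ) := by
      have := Finset.sum_le_sum fun m (_ : m ∈ Finset.univ) => hle m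
      simp only [Finset.sum_const, Finset.card_univ, nsmul_eq_mul, mul_one] at this ⊢
      omega
    exact Or.inr fun m =>
      (Finset.sum_eq_sum_iff_of_le fun m _ => hle m).1 hsum m (Finset.mem_univ m)

lemma stdV_apply (i m : Fin 4) : stdV i m = if m = i then 1 else 0 := by
  simp [stdV]

lemma inner_stdV_left (i : Fin 4) (x : EuclideanSpace ℝ (Fin 4)) : ⟪stdV i, x⟫ = x i := by
  simp [stdV, EuclideanSpace.inner_single_left]

lemma mem_colG_iff {x : EuclideanSpace ℝ (Fin 4)} :
    x ∈ colG ↔ ∃ i, ∃ σ : ℝ, (σ = 1 ∨ σ = -1) ∧ x = σ • stdV i := by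
  constructor
  · rintro ⟨i, rfl | rfl⟩
    exacts [⟨i, 1, Or.inl rfl, by simp⟩, ⟨i, -1, Or.inr rfl, by simp⟩]
  · rintro ⟨i, σ, rfl | rfl, rfl⟩
    exacts [⟨i, Or.inl (by simp)⟩, ⟨i, Or.inr (by simp)⟩]

lemma inner_eq_sum_div_four {x y : EuclideanSpace ℝ (Fin 4)} {ε ε' : Fin 4 → ℝ}
    (hx : ∀ i, x i = ε i / 2) (hy : ∀ i, y i = ε' i / 2) :
    ⟪x, y⟫ = (∑ i, ε i * ε' i) / 4 := by
  simp only [PiLp.inner_apply, RCLike.inner_apply, conj_trivial, hx, hy, Finset.sum_div]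
  exact Finset.sum_congr rfl fun i _ => by ring

lemma abs_sum_eq_two_iff_prod_eq_neg_one {η : Fin 4 → ℝ} (h : ∀ i, η i = 1 ∨ η i = -1) :
    |∑ i, η i| = 2 ↔ ∏ i, η i = -1 := by
  rw [Fin.sum_univ_four, Fin.prod_univ_four]
  rcases h 0 with h0 | h0 <;> rcases h 1 with h1 | h1 <;> rcases h 2 with h2 | h2 <;>
    rcases h 3 with h3 | h3 <;> norm_num [h0, h1, h2, h3]

lemma abs_inner_eq_half_iff {x y : EuclideanSpace ℝ (Fin 4)} {ε ε' : Fin 4 → ℝ}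
    (hε : ∀ i, ε i = 1 ∨ ε i = -1) (hε' : ∀ i, ε' i = 1 ∨ ε' i = -1)
    (hx : ∀ i, x i = ε i / 2) (hy : ∀ i, y i = ε' i / 2) :
    |⟪x, y⟫| = 2⁻¹ ↔ (∏ i, ε i) * ∏ i, ε' i = -1 := by
  have hsigns : ∀ i, ε i * ε' i = 1 ∨ ε i * ε' i = -1 := fun i => by
    rcases hε i with h | h <;> rcases hε' i with h' | h' <;> norm_num [h, h']
  rw [← Finset.prod_mul_distrib, ← abs_sum_eq_two_iff_prod_eq_neg_one hsigns,
    inner_eq_sum_div_four hx hy, abs_div, abs_of_pos (by norm_num : (0 : ℝ) < 4)]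
  constructor <;> intro h <;> linarith

lemma abs_inner_colG_colG {g g' : EuclideanSpace ℝ (Fin 4)} (hg : g ∈ colG) (hg' : g' ∈ colG) :
    |⟪g, g'⟫| ≠ 2⁻¹ := by
  obtain ⟨i, σ, hσ, rfl⟩ := mem_colG_iff.1 hg
  obtain ⟨j, τ, hτ, rfl⟩ := mem_colG_iff.1 hg'
  rw [real_inner_smul_left, real_inner_smul_right, inner_stdV_left, stdV_apply]
  rcases hσ with rfl | rfl <;> rcases hτ with rfl | rfl <;> split_ifs <;> norm_num

lemma abs_inner_colG_half {g y : EuclideanSpace ℝ (Fin 4)} {ε : Fin 4 → ℝ} (hg : g ∈ colG)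
    (hε : ∀ i, ε i = 1 ∨ ε i = -1) (hy : ∀ i, y i = ε i / 2) :
    |⟪g, y⟫| = 2⁻¹ := by
  obtain ⟨i, σ, hσ, rfl⟩ := mem_colG_iff.1 hg
  rw [real_inner_smul_left, inner_stdV_left, hy]
  rcases hσ with rfl | rfl <;> rcases hε i with h | h <;> norm_num [h]

lemma exists_int_of_mem_cellV {x : EuclideanSpace ℝ (Fin 4)} (hx : x ∈ cellV) (m : Fin 4) :
    ∃ z : ℤ, x m = z := by
  obtain ⟨i, j, -, ε, δ, hε, hδ, rfl⟩ := hx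
  have hint : ∀ σ : ℝ, (σ = 1 ∨ σ = -1) → ∃ s : ℤ, σ = s := by
    rintro σ (rfl | rfl)
    exacts [⟨1, by simp⟩, ⟨-1, by simp⟩]
  obtain ⟨e, rfl⟩ := hint ε hε
  obtain ⟨d, rfl⟩ := hint δ hδ
  refine ⟨e * (if m = i then 1 else 0) + d * (if m = j then 1 else 0), ?_⟩
  simp [stdV_apply]

lemma norm_sq_of_mem_cellV {x : EuclideanSpace ℝ (Fin 4)} (hx : x ∈ cellV) : ‖x‖ ^ 2 = 2 := by
  obtain ⟨i, j, hij, ε, δ, hε, hδ, rfl⟩ := hx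
  have horth : ⟪ε • stdV i, δ • stdV j⟫ = 0 := by
    simp [real_inner_smul_left, real_inner_smul_right, inner_stdV_left, stdV_apply, hij]
  rw [norm_add_sq_real, horth, norm_smul, norm_smul]
  rcases hε with rfl | rfl <;> rcases hδ with rfl | rfl <;> norm_num [stdV]

lemma two_inv_smul_mem_colours {w : EuclideanSpace ℝ (Fin 4)} (hint : ∀ m, ∃ z : ℤ, w m = z)
    (hw : ‖w‖ ^ 2 = 4) : (2⁻¹ : ℝ) • w ∈ colG ∪ colR ∪ colB := by
  choose z hz using hint
  have hsum : ∑ m, z m ^ 2 = 4 := by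
    rw [EuclideanSpace.real_norm_sq_eq] at hw
    exact_mod_cast (by simpa [hz] using hw : ∑ m, (z m : ℝ) ^ 2 = 4)
  rcases Int.sum_sq_eq_four_cases (by simp) z hsum with ⟨m, hm, hzero⟩ | hsigns
  · refine Or.inl (Or.inl (mem_colG_iff.2 ⟨m, z m / 2, ?_, ?_⟩))
    · rcases sq_eq_sq_iff_eq_or_eq_neg.1 (hm.trans (by norm_num : (4 : ℤ) = 2 ^ 2)) with h | h <;>
        norm_num [h]
    · ext n
      by_cases hn : n = m
      · simp [hz, stdV_apply, hn, inv_mul_eq_div]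
      · simp [hz, stdV_apply, hn, hzero n hn]
  · have hε : ∀ m, (z m : ℝ) = 1 ∨ (z m : ℝ) = -1 := fun m => by
      exact_mod_cast sq_eq_one_iff.1 (hsigns m)
    have hprod : |∏ m, (z m : ℝ)| = 1 := by
      rw [Finset.abs_prod]
      exact Finset.prod_eq_one fun m _ => by rcases hε m with h | h <;> simp [h]
    have hcoord : ∀ m, ((2⁻¹ : ℝ) • w) m = z m / 2 := fun m => by
      simp [hz, inv_mul_eq_div]
    rcases (abs_eq zero_le_one).1 hprod with hp | hp
    exacts [Or.inl (Or.inr ⟨_, hε, hp, hcoord⟩), Or.inr ⟨_, hε, hp, hcoord⟩]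

lemma orthoMidpoints_cellV_subset : orthoMidpoints cellV ⊆ colG ∪ colR ∪ colB := by
  rintro _ ⟨u, hu, v, hv, huv, rfl⟩
  refine two_inv_smul_mem_colours (fun m => ?_) ?_
  · obtain ⟨a, ha⟩ := exists_int_of_mem_cellV hu m
    obtain ⟨b, hb⟩ := exists_int_of_mem_cellV hv m
    exact ⟨a + b, by simp [ha, hb]⟩
  · rw [norm_add_sq_real, huv, norm_sq_of_mem_cellV hu, norm_sq_of_mem_cellV hv]
    norm_num

lemma smul_stdV_mem_orthoMidpoints {σ : ℝ} (hσ : σ = 1 ∨ σ = -1) (i : Fin 4) :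
    σ • stdV i ∈ orthoMidpoints cellV := by
  obtain ⟨j, hji⟩ := exists_ne i
  refine ⟨σ • stdV i + (1 : ℝ) • stdV j, ⟨i, j, hji.symm, σ, 1, hσ, Or.inl rfl, rfl⟩,
    σ • stdV i + (-1 : ℝ) • stdV j, ⟨i, j, hji.symm, σ, -1, hσ, Or.inr rfl, rfl⟩, ?_, by module⟩
  simp only [inner_add_left, inner_add_right, real_inner_smul_left, real_inner_smul_right,
    inner_stdV_left, stdV_apply, hji, hji.symm]
  rcases hσ with rfl | rfl <;> norm_num

lemma mem_orthoMidpoints_cellV_of_half {x : EuclideanSpace ℝ (Fin 4)} {ε : Fin 4 → ℝ}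
    (hε : ∀ i, ε i = 1 ∨ ε i = -1) (hx : ∀ i, x i = ε i / 2) :
    x ∈ orthoMidpoints cellV := by
  refine ⟨ε 0 • stdV 0 + ε 1 • stdV 1, ⟨0, 1, by decide, ε 0, ε 1, hε 0, hε 1, rfl⟩,
    ε 2 • stdV 2 + ε 3 • stdV 3, ⟨2, 3, by decide, ε 2, ε 3, hε 2, hε 3, rfl⟩, ?_, ?_⟩
  · simp [inner_add_left, inner_add_right, real_inner_smul_left, real_inner_smul_right,
      inner_stdV_left, stdV_apply]
  · ext m
    fin_cases m <;> simp [hx, stdV_apply] <;> ring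

lemma orthoMidpoints_cellV : orthoMidpoints cellV = colG ∪ colR ∪ colB := by
  refine orthoMidpoints_cellV_subset.antisymm ?_
  rintro x ((hx | ⟨ε, hε, -, hx⟩) | ⟨ε, hε, -, hx⟩)
  · obtain ⟨i, σ, hσ, rfl⟩ := mem_colG_iff.1 hx
    exact smul_stdV_mem_orthoMidpoints hσ i
  all_goals exact mem_orthoMidpoints_cellV_of_half hε hx

lemma colourClass_of_mem_colG {c : EuclideanSpace ℝ (Fin 4)} (hc : c ∈ colG) :
    colourClass (colG ∪ colR ∪ colB) c = colG := by
  rw [Set.union_assoc]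
  refine colourClass_union_eq_left (fun w hw => abs_inner_colG_colG hc hw) ?_
  rintro w (⟨ε, hε, -, hw⟩ | ⟨ε, hε, -, hw⟩) <;> exact abs_inner_colG_half hc hε hw

lemma colourClass_of_mem_colR {c : EuclideanSpace ℝ (Fin 4)} (hc : c ∈ colR) :
    colourClass (colG ∪ colR ∪ colB) c = colR := by
  obtain ⟨ε, hε, hp, hc⟩ := hc
  rw [Set.union_comm colG, Set.union_assoc]
  refine colourClass_union_eq_left ?_ ?_
  · rintro w ⟨ε', hε', hp', hw⟩
    rw [Ne, abs_inner_eq_half_iff hε hε' hc hw, hp, hp']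
    norm_num
  · rintro w (hw | ⟨ε', hε', hp', hw⟩)
    · rw [real_inner_comm]
      exact abs_inner_colG_half hw hε hc
    · rw [abs_inner_eq_half_iff hε hε' hc hw, hp, hp']
      norm_num

lemma colourClass_of_mem_colB {c : EuclideanSpace ℝ (Fin 4)} (hc : c ∈ colB) :
    colourClass (colG ∪ colR ∪ colB) c = colB := by
  obtain ⟨ε, hε, hp, hc⟩ := hc
  rw [Set.union_comm]
  refine colourClass_union_eq_left ?_ ?_
  · rintro w ⟨ε', hε', hp', hw⟩
    rw [Ne, abs_inner_eq_half_iff hε hε' hc hw, hp, hp']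
    norm_num
  · rintro w (hw | ⟨ε', hε', hp', hw⟩)
    · rw [real_inner_comm]
      exact abs_inner_colG_half hw hε hc
    · rw [abs_inner_eq_half_iff hε hε' hc hw, hp, hp']
      norm_num

lemma colourClass_mem_colours {c : EuclideanSpace ℝ (Fin 4)} (hc : c ∈ colG ∪ colR ∪ colB) :
    colourClass (colG ∪ colR ∪ colB) c = colG ∨ colourClass (colG ∪ colR ∪ colB) c = colR ∨
      colourClass (colG ∪ colR ∪ colB) c = colB := by
  rcases hc with (hc | hc) | hc
  exacts [Or.inl (colourClass_of_mem_colG hc), Or.inr (Or.inl (colourClass_of_mem_colR hc)),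
    Or.inr (Or.inr (colourClass_of_mem_colB hc))]

lemma stdV_mem_colG (i : Fin 4) : stdV i ∈ colG := ⟨i, Or.inl rfl⟩

lemma toLp_half_mem_colR : WithLp.toLp 2 (fun _ => 1 / 2 : Fin 4 → ℝ) ∈ colR :=
  ⟨fun _ => 1, fun _ => Or.inl rfl, by simp, fun _ => by simp⟩

lemma toLp_half_mem_colB : WithLp.toLp 2 (![-1 / 2, 1 / 2, 1 / 2, 1 / 2] : Fin 4 → ℝ) ∈ colB :=
  ⟨![-1, 1, 1, 1], fun i => by fin_cases i <;> simp, by simp [Fin.prod_univ_four],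
    fun i => by fin_cases i <;> simp⟩

lemma colG_ne_colR : colG ≠ colR := by
  intro h
  obtain ⟨ε, hε, -, hx⟩ := h ▸ stdV_mem_colG 0
  exact abs_inner_colG_colG (stdV_mem_colG 0) (stdV_mem_colG 0)
    (abs_inner_colG_half (stdV_mem_colG 0) hε hx)

lemma colG_ne_colB : colG ≠ colB := by
  intro h
  obtain ⟨ε, hε, -, hx⟩ := h ▸ stdV_mem_colG 0
  exact abs_inner_colG_colG (stdV_mem_colG 0) (stdV_mem_colG 0)
    (abs_inner_colG_half (stdV_mem_colG 0) hε hx)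

lemma colR_ne_colB : colR ≠ colB := by
  intro h
  obtain ⟨ε, hε, hp, hx⟩ := toLp_half_mem_colR
  obtain ⟨ε', hε', hp', hx'⟩ := h ▸ toLp_half_mem_colR
  have hRR := (abs_inner_eq_half_iff hε hε hx hx).not.2 (by rw [hp]; norm_num)
  exact hRR ((abs_inner_eq_half_iff hε hε' hx hx').2 (by rw [hp, hp']; norm_num))

theorem symmetry_permutes_colours
    (φ : EuclideanSpace ℝ (Fin 4) ≃ₗᵢ[ℝ] EuclideanSpace ℝ (Fin 4))
    (hV : φ '' cellV = cellV) :
    (φ '' colG = colG ∨ φ '' colG = colR ∨ φ '' colG = colB) ∧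
    (φ '' colR = colG ∨ φ '' colR = colR ∨ φ '' colR = colB) ∧
    (φ '' colB = colG ∨ φ '' colB = colR ∨ φ '' colB = colB) ∧
    φ '' colG ≠ φ '' colR ∧ φ '' colG ≠ φ '' colB ∧ φ '' colR ≠ φ '' colB := by
  have hU : φ '' (colG ∪ colR ∪ colB) = colG ∪ colR ∪ colB := by
    simpa [← orthoMidpoints_cellV, hV] using φ.toLinearIsometry.image_orthoMidpoints cellV
  have image_colourClass (c) :
      φ '' colourClass (colG ∪ colR ∪ colB) c = colourClass (colG ∪ colR ∪ colB) (φ c) := by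
    simpa [hU] using φ.toLinearIsometry.image_colourClass (colG ∪ colR ∪ colB) c
  have image_mem_colours {X : Set (EuclideanSpace ℝ (Fin 4))} {c}
      (hc : c ∈ colG ∪ colR ∪ colB) (hX : colourClass (colG ∪ colR ∪ colB) c = X) :
      φ '' X = colG ∨ φ '' X = colR ∨ φ '' X = colB := by
    rw [← hX, image_colourClass c]
    exact colourClass_mem_colours (hU ▸ Set.mem_image_of_mem φ hc)
  have hg := stdV_mem_colG 0
  have hr := toLp_half_mem_colR
  have hb := toLp_half_mem_colB
  have hinj : Function.Injective (φ '' ·) := Set.image_injective.2 φ.injective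
  exact ⟨image_mem_colours (.inl (.inl hg)) (colourClass_of_mem_colG hg),
    image_mem_colours (.inl (.inr hr)) (colourClass_of_mem_colR hr),
    image_mem_colours (.inr hb) (colourClass_of_mem_colB hb),
    hinj.ne colG_ne_colR, hinj.ne colG_ne_colB, hinj.ne colR_ne_colB⟩
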